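/- arXiv:1704.03121 — 6 statements merged into one kernel-verified Lean document; each statement's English description precedes it below -/
import Mathlib

section
/- (Lemma 1, hard case) Let λ ≥ 0 and let H_λ : ℝ → ℝ be the hard-thresholding operator H_λ(t) = t if |t| > √(2λ) and H_λ(t) = 0 otherwise. Then for all real numbers x and y, |H_λ(x + y) − x| ≤ |y| + √(2λ). -/
/-- The hard-thresholding operator `H_λ(t) = t` if `|t| > √(2λ)`, else `0`. -/
noncomputable def hardThresh (lam t : ℝ) : ℝ :=
  if Real.sqrt (2 * lam) < |t| then t else 0

/-- Lemma 1 (hard case): for `λ ≥ 0` and all `x, y ∈ ℝ`,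
`|H_λ(x + y) − x| ≤ |y| + √(2λ)`. -/
theorem hard_thresh_perturb (lam : ℝ) (hlam : 0 ≤ lam) :
    ∀ x y : ℝ, |hardThresh lam (x + y) - x| ≤ |y| + Real.sqrt (2 * lam) := by
  intro x y
  unfold hardThresh
  split_ifs with h
  · have : x + y - x = y := by ring
    rw [this]
    have := Real.sqrt_nonneg (2 * lam)
    linarith
  · push_neg at h
    have h2 : |x| ≤ |x + y| + |y| := by
      calc |x| = |(x + y) + (-y)| := by ring_nf
        _ ≤ |x + y| + |(-y)| := abs_add_le _ _
        _ = |x + y| + |y| := by rw [abs_neg]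
    simp only [zero_sub, abs_neg]
    linarith
end

section
/- (Off-support annihilation for one soft-thresholding step) Let Ψ ∈ ℝ^{n×p} have unit-norm columns ψ_1,…,ψ_p with mutual coherence μ = max_{i≠j} |⟨ψ_i, ψ_j⟩|. Let x† ∈ ℝ^p have support A† with |A†| = s, and let y = Ψ x† + η with ‖η‖₂ ≤ ε. Let x ∈ ℝ^p satisfy supp(x) ⊂ A† and ‖x − x†‖_{ℓ∞} ≤ E, and let λ > 0 satisfy μ·s·E + ε ≤ λ. Then for every index i ∉ A†, the i-th component of the updated vector x⁺ = S_λ(x + Ψᵗ(y − Ψ x)) (soft thresholding applied componentwise) is zero; in particular supp(x⁺) ⊂ A†. -/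
open Finset Matrix

/-- The soft-thresholding operator `S_λ(t) = sgn(t) · max(|t| − λ, 0)`. -/
noncomputable def softThresh (lam t : ℝ) : ℝ := Real.sign t * max (|t| - lam) 0

lemma softThresh_eq_zero {lam t : ℝ} (h : |t| ≤ lam) : softThresh lam t = 0 := by
  unfold softThresh
  rw [max_eq_right (by linarith)]
  simp

/-- Off-support annihilation for one soft-thresholding step: if `supp(x) ⊂ A†`,
`‖x − x†‖_{ℓ∞} ≤ E` and `μ·s·E + ε ≤ λ`, then every off-support component of
`x⁺ = S_λ(x + Ψᵗ(y − Ψx))` vanishes; in particular `supp(x⁺) ⊂ A†`. -/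
theorem soft_step_off_support {n p : ℕ} (Ψ : Matrix (Fin n) (Fin p) ℝ)
    (μ ε E lam : ℝ) (s : ℕ)
    (xdag : Fin p → ℝ) (η y : Fin n → ℝ) (Adag : Finset (Fin p))
    (hcol : ∀ i, ∑ k, Ψ k i ^ 2 = 1)
    (hcoh : ∀ i j, i ≠ j → |∑ k, Ψ k i * Ψ k j| ≤ μ)
    (hsuppdag : Function.support xdag = (Adag : Set (Fin p)))
    (hcard : Adag.card = s)
    (hy : y = Ψ.mulVec xdag + η)
    (hη : Real.sqrt (∑ k, η k ^ 2) ≤ ε)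
    (x : Fin p → ℝ)
    (hsupp : Function.support x ⊆ (Adag : Set (Fin p)))
    (hE : ‖x - xdag‖ ≤ E)
    (hlam : 0 < lam) (hcond : μ * s * E + ε ≤ lam) :
    (∀ i ∉ Adag,
        softThresh lam (x i + Ψ.transpose.mulVec (y - Ψ.mulVec x) i) = 0) ∧
      Function.support
          (fun i => softThresh lam (x i + Ψ.transpose.mulVec (y - Ψ.mulVec x) i))
        ⊆ (Adag : Set (Fin p)) := by
  have hEnn : 0 ≤ E := le_trans (norm_nonneg _) hE
  have hEj : ∀ j, |xdag j - x j| ≤ E := by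
    intro j
    have := norm_le_pi_norm (x - xdag) j
    rw [abs_sub_comm]
    simpa [Real.norm_eq_abs] using le_trans this hE
  have key : ∀ i ∉ Adag,
      softThresh lam (x i + Ψ.transpose.mulVec (y - Ψ.mulVec x) i) = 0 := by
    intro i hi
    have hxi : x i = 0 := by
      by_contra h
      exact hi (by simpa using hsupp (Function.mem_support.mpr h))
    have hxj0 : ∀ j ∉ Adag, xdag j - x j = 0 := by
      intro j hj
      have h1 : xdag j = 0 := by
        by_contra h
        have hm := Function.mem_support.mpr h
        rw [hsuppdag] at hm
        exact hj (by simpa using hm)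
      have h2 : x j = 0 := by
        by_contra h
        exact hj (by simpa using hsupp (Function.mem_support.mpr h))
      simp [h1, h2]
    have hcomp : Ψ.transpose.mulVec (y - Ψ.mulVec x) i
        = (∑ j ∈ Adag, (xdag j - x j) * ∑ k, Ψ k i * Ψ k j) + ∑ k, Ψ k i * η k := by
      rw [Finset.sum_subset Adag.subset_univ
        (fun j _ hj => by rw [hxj0 j hj]; ring)]
      simp only [hy, Matrix.mulVec, Matrix.transpose_apply, dotProduct,
        Pi.sub_apply, Pi.add_apply, Finset.mul_sum]
      rw [Finset.sum_comm, ← Finset.sum_add_distrib]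
      refine Finset.sum_congr rfl fun k _ => ?_
      rw [mul_sub, mul_add, add_sub_right_comm, Finset.mul_sum, Finset.mul_sum,
        ← Finset.sum_sub_distrib]
      congr 1
      exact Finset.sum_congr rfl fun j _ => by ring
    have hnoise : |∑ k, Ψ k i * η k| ≤ ε := by
      have h1 := Finset.sum_mul_sq_le_sq_mul_sq Finset.univ (fun k => Ψ k i) η
      have h2 : (∑ k, Ψ k i * η k) ^ 2 ≤ ∑ k, η k ^ 2 := by
        simpa [hcol i] using h1
      have h3 : |∑ k, Ψ k i * η k| ≤ Real.sqrt (∑ k, η k ^ 2) := by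
        rw [← Real.sqrt_sq_eq_abs]
        exact Real.sqrt_le_sqrt h2
      linarith
    have hsumb : |∑ j ∈ Adag, (xdag j - x j) * ∑ k, Ψ k i * Ψ k j| ≤ μ * s * E := by
      refine le_trans (Finset.abs_sum_le_sum_abs _ _) ?_
      have hb : ∀ j ∈ Adag, |(xdag j - x j) * ∑ k, Ψ k i * Ψ k j| ≤ E * μ := by
        intro j hj
        have hij : i ≠ j := fun h => hi (h ▸ hj)
        rw [abs_mul]
        exact mul_le_mul (hEj j) (hcoh i j hij) (abs_nonneg _)
          hEnn
      have := Finset.sum_le_card_nsmul Adag _ (E * μ) hb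
      rw [hcard] at this
      calc (∑ j ∈ Adag, |(xdag j - x j) * ∑ k, Ψ k i * Ψ k j|)
          ≤ s • (E * μ) := this
        _ = μ * s * E := by simp [nsmul_eq_mul]; ring
    apply softThresh_eq_zero
    rw [hxi, zero_add, hcomp]
    calc |(∑ j ∈ Adag, (xdag j - x j) * ∑ k, Ψ k i * Ψ k j) + ∑ k, Ψ k i * η k|
        ≤ _ + _ := abs_add_le _ _
      _ ≤ μ * s * E + ε := add_le_add hsumb hnoise
      _ ≤ lam := hcond
  refine ⟨key, ?_⟩
  intro i hi
  by_contra h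
  exact (Function.mem_support.mp hi) (key i (by simpa using h))
end

section
/- (On-support error bound for one soft-thresholding step) Let Ψ ∈ ℝ^{n×p} have unit-norm columns ψ_1,…,ψ_p with mutual coherence μ = max_{i≠j} |⟨ψ_i, ψ_j⟩|. Let x† ∈ ℝ^p have support A† with |A†| = s ≥ 1, and let y = Ψ x† + η with ‖η‖₂ ≤ ε. Let x ∈ ℝ^p satisfy supp(x) ⊂ A† and ‖x − x†‖_{ℓ∞} ≤ E, and let λ > 0. Then for every index i ∈ A†, the updated vector x⁺ = S_λ(x + Ψᵗ(y − Ψ x)) (soft thresholding applied componentwise) satisfies |x⁺_i − x†_i| ≤ λ + μ·(s − 1)·E + ε. -/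
open Finset Matrix

lemma softThresh_sub_le {lam : ℝ} (h : 0 ≤ lam) (t : ℝ) :
    |softThresh lam t - t| ≤ lam := by
  unfold softThresh
  rcases le_or_gt (|t|) lam with hle | hlt
  · rw [max_eq_right (by linarith)]
    simpa using hle
  · rw [max_eq_left (by linarith)]
    have ht : t ≠ 0 := by
      intro h0
      rw [h0] at hlt; simp at hlt; linarith
    have hsgn : |Real.sign t| = 1 := by
      rcases ht.lt_or_gt with h' | h'
      · simp [Real.sign_of_neg h']
      · simp [Real.sign_of_pos h']
    have hsm : Real.sign t * |t| = t := by
      rcases ht.lt_or_gt with h' | h'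
      · rw [Real.sign_of_neg h', abs_of_neg h']; ring
      · rw [Real.sign_of_pos h', abs_of_pos h']; ring
    rw [mul_sub, hsm,
      show t - Real.sign t * lam - t = -(Real.sign t * lam) by ring,
      abs_neg, abs_mul, hsgn, one_mul, abs_of_nonneg h]

/-- On-support error bound for one soft-thresholding step: if `supp(x) ⊂ A†` and
`‖x − x†‖_{ℓ∞} ≤ E`, then for every `i ∈ A†` the update
`x⁺ = S_λ(x + Ψᵗ(y − Ψx))` satisfies `|x⁺_i − x†_i| ≤ λ + μ(s−1)E + ε`. -/
theorem soft_step_on_support {n p : ℕ} (Ψ : Matrix (Fin n) (Fin p) ℝ)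
    (μ ε E lam : ℝ) (s : ℕ)
    (xdag : Fin p → ℝ) (η y : Fin n → ℝ) (Adag : Finset (Fin p))
    (hcol : ∀ i, ∑ k, Ψ k i ^ 2 = 1)
    (hcoh : ∀ i j, i ≠ j → |∑ k, Ψ k i * Ψ k j| ≤ μ)
    (hsuppdag : Function.support xdag = (Adag : Set (Fin p)))
    (hcard : Adag.card = s) (hs : 1 ≤ s)
    (hy : y = Ψ.mulVec xdag + η)
    (hη : Real.sqrt (∑ k, η k ^ 2) ≤ ε)
    (x : Fin p → ℝ)
    (hsupp : Function.support x ⊆ (Adag : Set (Fin p)))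
    (hE : ‖x - xdag‖ ≤ E)
    (hlam : 0 < lam) :
    ∀ i ∈ Adag,
      |softThresh lam (x i + Ψ.transpose.mulVec (y - Ψ.mulVec x) i) - xdag i|
        ≤ lam + μ * ((s : ℝ) - 1) * E + ε := by
  intro i hi
  set t : ℝ := x i + Ψ.transpose.mulVec (y - Ψ.mulVec x) i with ht
  have hE0 : (0:ℝ) ≤ E := le_trans (norm_nonneg _) hE
  have hdE : ∀ j, |xdag j - x j| ≤ E := by
    intro j
    have h1 : ‖(x - xdag) j‖ ≤ ‖x - xdag‖ := norm_le_pi_norm (x - xdag) j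
    have : |x j - xdag j| ≤ E := le_trans h1 hE
    rwa [abs_sub_comm] at this
  have hdzero : ∀ j, j ∉ Adag → xdag j - x j = 0 := by
    intro j hj
    have h1 : xdag j = 0 := by
      by_contra h
      exact hj (by rw [← Finset.mem_coe, ← hsuppdag]; exact h)
    have h2 : x j = 0 := by
      by_contra h
      exact hj (by rw [← Finset.mem_coe]; exact hsupp h)
    rw [h1, h2, sub_zero]
  -- expand t - xdag i
  have expand : t - xdag i =
      (∑ j ∈ Finset.univ.erase i, (∑ k, Ψ k i * Ψ k j) * (xdag j - x j))
        + ∑ k, Ψ k i * η k := by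
    have h1 : ∀ k, Ψ k i * ((y - Ψ.mulVec x) k)
        = (∑ j, Ψ k i * Ψ k j * (xdag j - x j)) + Ψ k i * η k := by
      intro k
      rw [hy]
      simp only [Pi.sub_apply, Pi.add_apply, Matrix.mulVec, dotProduct]
      have hAB : (∑ j, Ψ k j * xdag j) - ∑ j, Ψ k j * x j
          = ∑ j, Ψ k j * (xdag j - x j) := by
        rw [← Finset.sum_sub_distrib]
        exact Finset.sum_congr rfl (fun j _ => (mul_sub _ _ _).symm)
      rw [add_sub_right_comm, hAB, mul_add, Finset.mul_sum]
      congr 1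
      exact Finset.sum_congr rfl (fun j _ => (mul_assoc _ _ _).symm)
    have h2 : Ψ.transpose.mulVec (y - Ψ.mulVec x) i
        = (∑ j, (∑ k, Ψ k i * Ψ k j) * (xdag j - x j)) + ∑ k, Ψ k i * η k := by
      simp only [Matrix.mulVec, dotProduct, Matrix.transpose_apply]
      rw [Finset.sum_congr rfl (fun k _ => h1 k), Finset.sum_add_distrib]
      congr 1
      rw [Finset.sum_comm]
      exact Finset.sum_congr rfl (fun j _ => by rw [Finset.sum_mul])
    have h3 : (∑ j, (∑ k, Ψ k i * Ψ k j) * (xdag j - x j))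
        = (∑ j ∈ Finset.univ.erase i, (∑ k, Ψ k i * Ψ k j) * (xdag j - x j))
          + (xdag i - x i) := by
      rw [← Finset.sum_erase_add _ _ (Finset.mem_univ i)]
      congr 1
      have : (∑ k, Ψ k i * Ψ k i) = 1 := by
        rw [← hcol i]; exact Finset.sum_congr rfl (fun k _ => (sq (Ψ k i)).symm)
      rw [this, one_mul]
    rw [ht, h2, h3]; ring
  -- restrict the sum to Adag.erase i
  have hrestrict : (∑ j ∈ Finset.univ.erase i, (∑ k, Ψ k i * Ψ k j) * (xdag j - x j))
      = ∑ j ∈ Adag.erase i, (∑ k, Ψ k i * Ψ k j) * (xdag j - x j) := by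
    refine (Finset.sum_subset (fun j hj => ?_) (fun j hj hj' => ?_)).symm
    · exact Finset.mem_erase.mpr ⟨(Finset.mem_erase.mp hj).1, Finset.mem_univ _⟩
    · have hji : j ≠ i := (Finset.mem_erase.mp hj).1
      have hjA : j ∉ Adag := fun h => hj' (Finset.mem_erase.mpr ⟨hji, h⟩)
      rw [hdzero j hjA, mul_zero]
  -- bound the interference sum
  have hsumbound : |∑ j ∈ Adag.erase i, (∑ k, Ψ k i * Ψ k j) * (xdag j - x j)|
      ≤ μ * ((s : ℝ) - 1) * E := by
    calc |∑ j ∈ Adag.erase i, (∑ k, Ψ k i * Ψ k j) * (xdag j - x j)|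
        ≤ ∑ j ∈ Adag.erase i, |(∑ k, Ψ k i * Ψ k j) * (xdag j - x j)| :=
          Finset.abs_sum_le_sum_abs _ _
      _ ≤ ∑ j ∈ Adag.erase i, μ * E := by
          refine Finset.sum_le_sum (fun j hj => ?_)
          have hji : j ≠ i := (Finset.mem_erase.mp hj).1
          have hg : |∑ k, Ψ k i * Ψ k j| ≤ μ := hcoh i j (Ne.symm hji)
          rw [abs_mul]
          exact mul_le_mul hg (hdE j) (abs_nonneg _) (le_trans (abs_nonneg _) hg)
      _ = ((Adag.erase i).card : ℝ) * (μ * E) := by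
          rw [Finset.sum_const, nsmul_eq_mul]
      _ = μ * ((s : ℝ) - 1) * E := by
          rw [Finset.card_erase_of_mem hi, hcard, Nat.cast_sub hs, Nat.cast_one]
          ring
  -- Cauchy–Schwarz for the noise term
  have hnoise : |∑ k, Ψ k i * η k| ≤ ε := by
    have hcs2 : (∑ k, Ψ k i * η k) ^ 2 ≤ (∑ k, Ψ k i ^ 2) * ∑ k, η k ^ 2 := by
      have := Finset.sum_mul_sq_le_sq_mul_sq Finset.univ (fun k => Ψ k i) η
      simpa using this
    rw [hcol i, one_mul] at hcs2
    have h1 : |∑ k, Ψ k i * η k| = Real.sqrt ((∑ k, Ψ k i * η k) ^ 2) :=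
      (Real.sqrt_sq_eq_abs _).symm
    rw [h1]
    exact le_trans (Real.sqrt_le_sqrt hcs2) hη
  have hkey : |t - xdag i| ≤ μ * ((s : ℝ) - 1) * E + ε := by
    rw [expand, hrestrict]
    exact le_trans (abs_add_le _ _) (add_le_add hsumbound hnoise)
  calc |softThresh lam t - xdag i|
      ≤ |softThresh lam t - t| + |t - xdag i| := abs_sub_le _ _ _
    _ ≤ lam + (μ * ((s : ℝ) - 1) * E + ε) :=
        add_le_add (softThresh_sub_le hlam.le t) hkey
    _ = lam + μ * ((s : ℝ) - 1) * E + ε := by ring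
end

section
/- (Off-support annihilation for one hard-thresholding step) Let Ψ ∈ ℝ^{n×p} have unit-norm columns ψ_1,…,ψ_p with mutual coherence μ = max_{i≠j} |⟨ψ_i, ψ_j⟩|. Let x† ∈ ℝ^p have support A† with |A†| = s, and let y = Ψ x† + η with ‖η‖₂ ≤ ε. Let x ∈ ℝ^p satisfy supp(x) ⊂ A† and ‖x − x†‖_{ℓ∞} ≤ E, and let λ > 0 satisfy μ·s·E + ε ≤ √(2λ). Then for every index i ∉ A†, the i-th component of the updated vector x⁺ = H_λ(x + Ψᵗ(y − Ψ x)) (hard thresholding applied componentwise) is zero; in particular supp(x⁺) ⊂ A†. -/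
open Finset Matrix

/-- Off-support annihilation for one hard-thresholding step: if `supp(x) ⊂ A†`,
`‖x − x†‖_{ℓ∞} ≤ E` and `μ·s·E + ε ≤ √(2λ)`, then every off-support component of
`x⁺ = H_λ(x + Ψᵗ(y − Ψx))` vanishes; in particular `supp(x⁺) ⊂ A†`. -/
theorem hard_step_off_support {n p : ℕ} (Ψ : Matrix (Fin n) (Fin p) ℝ)
    (μ ε E lam : ℝ) (s : ℕ)
    (xdag : Fin p → ℝ) (η y : Fin n → ℝ) (Adag : Finset (Fin p))
    (hcol : ∀ i, ∑ k, Ψ k i ^ 2 = 1)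
    (hcoh : ∀ i j, i ≠ j → |∑ k, Ψ k i * Ψ k j| ≤ μ)
    (hsuppdag : Function.support xdag = (Adag : Set (Fin p)))
    (hcard : Adag.card = s)
    (hy : y = Ψ.mulVec xdag + η)
    (hη : Real.sqrt (∑ k, η k ^ 2) ≤ ε)
    (x : Fin p → ℝ)
    (hsupp : Function.support x ⊆ (Adag : Set (Fin p)))
    (hE : ‖x - xdag‖ ≤ E)
    (hlam : 0 < lam) (hcond : μ * s * E + ε ≤ Real.sqrt (2 * lam)) :
    (∀ i ∉ Adag,
        hardThresh lam (x i + Ψ.transpose.mulVec (y - Ψ.mulVec x) i) = 0) ∧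
      Function.support
          (fun i => hardThresh lam (x i + Ψ.transpose.mulVec (y - Ψ.mulVec x) i))
        ⊆ (Adag : Set (Fin p)) := by
  have hE0 : 0 ≤ E := le_trans (norm_nonneg _) hE
  have key : ∀ i ∉ Adag,
      hardThresh lam (x i + Ψ.transpose.mulVec (y - Ψ.mulVec x) i) = 0 := by
    intro i hi
    have hxi : x i = 0 := by
      by_contra h
      exact hi (hsupp h)
    set d : Fin p → ℝ := fun j => xdag j - x j with hd
    have hdoff : ∀ j ∉ Adag, d j = 0 := by
      intro j hj
      have h1 : xdag j = 0 := by
        by_contra h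
        exact hj (by simpa [hsuppdag] using (Function.mem_support.mpr h))
      have h2 : x j = 0 := by
        by_contra h
        exact hj (hsupp h)
      simp [hd, h1, h2]
    have hdE : ∀ j, |d j| ≤ E := by
      intro j
      have := norm_le_pi_norm (x - xdag) j
      calc |d j| = ‖(x - xdag) j‖ := by
            simp [hd, Real.norm_eq_abs, abs_sub_comm]
        _ ≤ ‖x - xdag‖ := this
        _ ≤ E := hE
    -- rewrite the updated component
    have ht : x i + Ψ.transpose.mulVec (y - Ψ.mulVec x) i
        = (∑ j ∈ Adag, d j * ∑ k, Ψ k i * Ψ k j) + ∑ k, Ψ k i * η k := by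
      rw [hxi, hy]
      have hstep : ∀ k, (Ψ.mulVec xdag + η - Ψ.mulVec x) k
          = (∑ j, Ψ k j * d j) + η k := by
        intro k
        simp only [Pi.add_apply, Pi.sub_apply, Matrix.mulVec, dotProduct, hd,
          mul_sub, Finset.sum_sub_distrib]
        ring
      have : Ψ.transpose.mulVec (Ψ.mulVec xdag + η - Ψ.mulVec x) i
          = ∑ k, Ψ k i * ((∑ j, Ψ k j * d j) + η k) := by
        simp only [Matrix.mulVec, dotProduct, Matrix.transpose_apply]
        exact Finset.sum_congr rfl fun k _ => by rw [hstep k]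
      rw [this]
      simp only [mul_add, Finset.sum_add_distrib, Finset.mul_sum]
      rw [zero_add, Finset.sum_comm]
      congr 1
      rw [← Finset.sum_subset (Finset.subset_univ Adag)
        (fun j _ hj => by simp [hdoff j hj])]
      exact Finset.sum_congr rfl fun j _ =>
        Finset.sum_congr rfl fun k _ => by ring
    -- bound the coherence part
    have hS : |∑ j ∈ Adag, d j * ∑ k, Ψ k i * Ψ k j| ≤ μ * s * E := by
      calc |∑ j ∈ Adag, d j * ∑ k, Ψ k i * Ψ k j|
          ≤ ∑ j ∈ Adag, |d j * ∑ k, Ψ k i * Ψ k j| := Finset.abs_sum_le_sum_abs _ _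
        _ ≤ ∑ j ∈ Adag, E * μ := by
            refine Finset.sum_le_sum fun j hj => ?_
            rw [abs_mul]
            have hij : i ≠ j := fun h => hi (h ▸ hj)
            exact mul_le_mul (hdE j) (hcoh i j hij) (abs_nonneg _) hE0
        _ = μ * s * E := by rw [Finset.sum_const, hcard]; push_cast; ring
    -- bound the noise part
    have hN : |∑ k, Ψ k i * η k| ≤ ε := by
      have hcs := Finset.sum_mul_sq_le_sq_mul_sq Finset.univ (fun k => Ψ k i) η
      rw [hcol i, one_mul] at hcs
      calc |∑ k, Ψ k i * η k| = Real.sqrt ((∑ k, Ψ k i * η k) ^ 2) :=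
            (Real.sqrt_sq_eq_abs _).symm
        _ ≤ Real.sqrt (∑ k, η k ^ 2) := Real.sqrt_le_sqrt hcs
        _ ≤ ε := hη
    have habs : |x i + Ψ.transpose.mulVec (y - Ψ.mulVec x) i| ≤ Real.sqrt (2 * lam) := by
      rw [ht]
      calc |(∑ j ∈ Adag, d j * ∑ k, Ψ k i * Ψ k j) + ∑ k, Ψ k i * η k|
          ≤ |∑ j ∈ Adag, d j * ∑ k, Ψ k i * Ψ k j| + |∑ k, Ψ k i * η k| := abs_add_le _ _
        _ ≤ μ * s * E + ε := add_le_add hS hN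
        _ ≤ Real.sqrt (2 * lam) := hcond
    unfold hardThresh
    rw [if_neg (not_lt.mpr habs)]
  refine ⟨key, fun i hi => ?_⟩
  by_contra h
  exact hi (key i h)
end

section
/- (On-support error bound for one hard-thresholding step) Let Ψ ∈ ℝ^{n×p} have unit-norm columns ψ_1,…,ψ_p with mutual coherence μ = max_{i≠j} |⟨ψ_i, ψ_j⟩|. Let x† ∈ ℝ^p have support A† with |A†| = s ≥ 1, and let y = Ψ x† + η with ‖η‖₂ ≤ ε. Let x ∈ ℝ^p satisfy supp(x) ⊂ A† and ‖x − x†‖_{ℓ∞} ≤ E, and let λ > 0. Then for every index i ∈ A†, the updated vector x⁺ = H_λ(x + Ψᵗ(y − Ψ x)) (hard thresholding applied componentwise) satisfies |x⁺_i − x†_i| ≤ √(2λ) + μ·(s − 1)·E + ε. -/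
open Finset Matrix

/-- On-support error bound for one hard-thresholding step: if `supp(x) ⊂ A†` and
`‖x − x†‖_{ℓ∞} ≤ E`, then for every `i ∈ A†` the update
`x⁺ = H_λ(x + Ψᵗ(y − Ψx))` satisfies `|x⁺_i − x†_i| ≤ √(2λ) + μ(s−1)E + ε`. -/
theorem hard_step_on_support {n p : ℕ} (Ψ : Matrix (Fin n) (Fin p) ℝ)
    (μ ε E lam : ℝ) (s : ℕ)
    (xdag : Fin p → ℝ) (η y : Fin n → ℝ) (Adag : Finset (Fin p))
    (hcol : ∀ i, ∑ k, Ψ k i ^ 2 = 1)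
    (hcoh : ∀ i j, i ≠ j → |∑ k, Ψ k i * Ψ k j| ≤ μ)
    (hsuppdag : Function.support xdag = (Adag : Set (Fin p)))
    (hcard : Adag.card = s) (hs : 1 ≤ s)
    (hy : y = Ψ.mulVec xdag + η)
    (hη : Real.sqrt (∑ k, η k ^ 2) ≤ ε)
    (x : Fin p → ℝ)
    (hsupp : Function.support x ⊆ (Adag : Set (Fin p)))
    (hE : ‖x - xdag‖ ≤ E)
    (hlam : 0 < lam) :
    ∀ i ∈ Adag,
      |hardThresh lam (x i + Ψ.transpose.mulVec (y - Ψ.mulVec x) i) - xdag i|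
        ≤ Real.sqrt (2 * lam) + μ * ((s : ℝ) - 1) * E + ε := by
  intro i hi
  have hE0 : 0 ≤ E := le_trans (norm_nonneg _) hE
  have hε0 : 0 ≤ ε := le_trans (Real.sqrt_nonneg _) hη
  set u : ℝ := x i + Ψ.transpose.mulVec (y - Ψ.mulVec x) i with hu
  -- rewrite u - xdag i
  have key : u - xdag i
      = (∑ j ∈ Finset.univ.erase i, (∑ k, Ψ k i * Ψ k j) * (xdag j - x j))
        + ∑ k, Ψ k i * η k := by
    have hgii : (∑ k, Ψ k i * Ψ k i) = 1 := by
      have := hcol i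
      simpa [pow_two] using this
    have expand : Ψ.transpose.mulVec (y - Ψ.mulVec x) i
        = (∑ j, (∑ k, Ψ k i * Ψ k j) * (xdag j - x j)) + ∑ k, Ψ k i * η k := by
      subst hy
      simp only [Matrix.mulVec, Matrix.transpose_apply, dotProduct,
        Pi.sub_apply, Pi.add_apply]
      calc ∑ k, Ψ k i * ((∑ j, Ψ k j * xdag j) + η k - ∑ j, Ψ k j * x j)
          = ∑ k, ((∑ j, Ψ k i * Ψ k j * (xdag j - x j)) + Ψ k i * η k) := by
            apply Finset.sum_congr rfl
            intro k _
            have h1 : Ψ k i * ((∑ j, Ψ k j * xdag j) + η k - ∑ j, Ψ k j * x j)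
                = ((Ψ k i * ∑ j, Ψ k j * xdag j) - Ψ k i * ∑ j, Ψ k j * x j)
                  + Ψ k i * η k := by ring
            rw [h1, Finset.mul_sum, Finset.mul_sum, ← Finset.sum_sub_distrib]
            congr 1
            apply Finset.sum_congr rfl
            intro j _
            ring
        _ = (∑ k, ∑ j, Ψ k i * Ψ k j * (xdag j - x j)) + ∑ k, Ψ k i * η k :=
            Finset.sum_add_distrib
        _ = (∑ j, (∑ k, Ψ k i * Ψ k j) * (xdag j - x j)) + ∑ k, Ψ k i * η k := by
            rw [Finset.sum_comm]
            congr 1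
            apply Finset.sum_congr rfl
            intro j _
            rw [Finset.sum_mul]
    rw [hu, expand]
    rw [← Finset.add_sum_erase (a := i) _ _ (Finset.mem_univ i), hgii]
    ring
  -- restrict the sum to Adag.erase i
  have hrestrict : (∑ j ∈ Finset.univ.erase i, (∑ k, Ψ k i * Ψ k j) * (xdag j - x j))
      = ∑ j ∈ Adag.erase i, (∑ k, Ψ k i * Ψ k j) * (xdag j - x j) := by
    refine (Finset.sum_subset ?_ ?_).symm
    · exact Finset.erase_subset_erase _ (Finset.subset_univ _)
    · intro j hjuniv hj
      have hji : j ≠ i := (Finset.mem_erase.mp hjuniv).1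
      have hjA : j ∉ Adag := fun hA => hj (Finset.mem_erase.mpr ⟨hji, hA⟩)
      have hx0 : x j = 0 := by
        by_contra h
        exact hjA (by exact_mod_cast hsupp h)
      have hxd0 : xdag j = 0 := by
        by_contra h
        have : j ∈ (Adag : Set (Fin p)) := hsuppdag ▸ h
        exact hjA (by exact_mod_cast this)
      simp [hx0, hxd0]
  -- bound the coherence sum
  have hsum : |∑ j ∈ Adag.erase i, (∑ k, Ψ k i * Ψ k j) * (xdag j - x j)|
      ≤ μ * ((s : ℝ) - 1) * E := by
    calc |∑ j ∈ Adag.erase i, (∑ k, Ψ k i * Ψ k j) * (xdag j - x j)|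
        ≤ ∑ j ∈ Adag.erase i, |(∑ k, Ψ k i * Ψ k j) * (xdag j - x j)| :=
          Finset.abs_sum_le_sum_abs _ _
      _ ≤ ∑ _j ∈ Adag.erase i, μ * E := by
          apply Finset.sum_le_sum
          intro j hj
          have hji : j ≠ i := (Finset.mem_erase.mp hj).1
          have h1 : |∑ k, Ψ k i * Ψ k j| ≤ μ := hcoh i j (Ne.symm hji)
          have h2 : |xdag j - x j| ≤ E := by
            have := norm_le_pi_norm (x - xdag) j
            rw [abs_sub_comm]
            simpa [Real.norm_eq_abs] using this.trans hE
          rw [abs_mul]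
          exact mul_le_mul h1 h2 (abs_nonneg _) (le_trans (abs_nonneg _) h1)
      _ = ((Adag.erase i).card : ℝ) * (μ * E) := by
          rw [Finset.sum_const, nsmul_eq_mul]
      _ = μ * ((s : ℝ) - 1) * E := by
          rw [Finset.card_erase_of_mem hi, hcard]
          have : ((s - 1 : ℕ) : ℝ) = (s : ℝ) - 1 := by
            rw [Nat.cast_sub hs]; norm_num
          rw [this]; ring
  -- bound the noise term by Cauchy-Schwarz
  have hnoise : |∑ k, Ψ k i * η k| ≤ ε := by
    have hsq2 : (∑ k, Ψ k i * η k) ^ 2 ≤ ∑ k, η k ^ 2 := by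
      have := Finset.sum_mul_sq_le_sq_mul_sq Finset.univ (fun k => Ψ k i) η
      simpa [hcol i] using this
    have : |∑ k, Ψ k i * η k| ≤ Real.sqrt (∑ k, η k ^ 2) := by
      rw [← Real.sqrt_sq_eq_abs]
      exact Real.sqrt_le_sqrt hsq2
    exact this.trans hη
  -- combine
  have hdiff : |u - xdag i| ≤ μ * ((s : ℝ) - 1) * E + ε := by
    rw [key, hrestrict]
    exact (abs_add_le _ _).trans (add_le_add hsum hnoise)
  have hsq : 0 ≤ Real.sqrt (2 * lam) := Real.sqrt_nonneg _
  unfold hardThresh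
  split_ifs with h
  · linarith [hdiff]
  · push_neg at h
    have habs : |(0 : ℝ) - xdag i| ≤ |u| + |u - xdag i| := by
      rw [zero_sub, abs_neg]
      calc |xdag i| = |u - (u - xdag i)| := by congr 1; ring
        _ ≤ |u| + |u - xdag i| := abs_sub _ _
    linarith [habs, hdiff, h]
end

section
/- (Key one-step implication for IHTC) Let Ψ ∈ ℝ^{n×p} have unit-norm columns with mutual coherence μ satisfying μ·s < 1/2, where x† ∈ ℝ^p has support A† with |A†| = s ≥ 1, and y = Ψ x† + η with ‖η‖₂ ≤ ε. Let C₀ > 1/(2(1 − 2μs)²), set α = (1 − 1/√(2C₀))/(μs), let γ ∈ [(2μs/(1 − 1/√(2C₀)))², 1), and let λ ≥ C₀ ε². If x ∈ ℝ^p satisfies supp(x) ⊂ A† and ‖x − x†‖_{ℓ∞} ≤ α √(2λ), then the one-step hard-thresholding update x⁺ = H_λ(x + Ψᵗ(y − Ψ x)) satisfies supp(x⁺) ⊂ A† and ‖x⁺ − x†‖_{ℓ∞} ≤ α √(2γλ). -/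
open Finset Matrix

/-!
Write `B = √(2λ)` and `c = 1/√(2C₀)`, so that `ε ≤ c B` and `μ s α = 1 - c`. Since `x - x†` is
supported on the `s` coordinates of `A†` and the off-diagonal entries of `ΨᵀΨ` are at most `μ`,
every coordinate of the gradient step `x + Ψᵀ(y - Ψx) = x† + (ΨᵀΨ - 1)(x† - x) + Ψᵀη` lies within
`μ s (α B) + ε ≤ (1 - c) B + c B = B` of the matching coordinate of `x†`. Hard thresholding at
level `B` then kills every coordinate outside `A†` and moves the others by at most `2B`, and
`2 ≤ α √γ` is exactly the lower bound on `γ`.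
-/

section HardThreshold

variable {lam t a : ℝ}

theorem hardThresh_eq_zero_of_abs_le (h : |t| ≤ √(2 * lam)) : hardThresh lam t = 0 :=
  if_neg h.not_gt

theorem abs_hardThresh_sub_le (h : |t - a| ≤ √(2 * lam)) :
    |hardThresh lam t - a| ≤ 2 * √(2 * lam) := by
  unfold hardThresh
  split_ifs with ht
  · linarith [Real.sqrt_nonneg (2 * lam)]
  · have hta : |a| - |t| ≤ |t - a| := abs_sub_comm a t ▸ abs_sub_abs_le_abs_sub a t
    rw [zero_sub, abs_neg]
    linarith [not_lt.mp ht]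

variable {ι : Type*} {u v : ι → ℝ}

theorem support_hardThresh_subset (h : ∀ i, |u i - v i| ≤ √(2 * lam)) :
    Function.support (fun i => hardThresh lam (u i)) ⊆ Function.support v := by
  intro i hi
  by_contra hvi
  rw [Function.notMem_support] at hvi
  exact hi (hardThresh_eq_zero_of_abs_le (by simpa [hvi] using h i))

theorem norm_hardThresh_sub_le [Fintype ι] (h : ∀ i, |u i - v i| ≤ √(2 * lam)) :
    ‖(fun i => hardThresh lam (u i)) - v‖ ≤ 2 * √(2 * lam) :=
  (pi_norm_le_iff_of_nonneg (by positivity)).mpr fun i => abs_hardThresh_sub_le (h i)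

end HardThreshold

section Coherence

variable {m ι : Type*}

theorem abs_gram_sub_one_apply_le [Fintype m] [DecidableEq ι] (Ψ : Matrix m ι ℝ) {μ : ℝ}
    (hμ : 0 ≤ μ) (hcol : ∀ i, ∑ k, Ψ k i ^ 2 = 1)
    (hcoh : ∀ i j, i ≠ j → |∑ k, Ψ k i * Ψ k j| ≤ μ) (i j : ι) :
    |(Ψᵀ * Ψ - 1 : Matrix ι ι ℝ) i j| ≤ μ := by
  simp only [Matrix.sub_apply, mul_apply, transpose_apply]
  rcases eq_or_ne i j with rfl | hij
  · simpa [← sq, hcol] using hμ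
  · simpa [one_apply_ne hij] using hcoh i j hij

theorem abs_mulVec_apply_le_of_support_subset [Fintype ι] (M : Matrix m ι ℝ) {μ : ℝ}
    (hM : ∀ i j, |M i j| ≤ μ) {d : ι → ℝ} {A : Finset ι}
    (hd : Function.support d ⊆ A) (i : m) :
    |(M *ᵥ d) i| ≤ A.card * μ * ‖d‖ := by
  have hsum : (M *ᵥ d) i = ∑ j ∈ A, M i j * d j := by
    refine (sum_subset (subset_univ A) fun j _ hj => ?_).symm
    rw [Function.notMem_support.mp fun h => hj (hd h), mul_zero]
  calc |(M *ᵥ d) i| ≤ ∑ j ∈ A, |M i j * d j| := hsum ▸ abs_sum_le_sum_abs _ _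
    _ ≤ ∑ _j ∈ A, μ * ‖d‖ := sum_le_sum fun j _ => by
        rw [abs_mul]
        exact mul_le_mul (hM i j) (norm_le_pi_norm d j) (abs_nonneg _)
          ((abs_nonneg _).trans (hM i j))
    _ = A.card * μ * ‖d‖ := by rw [sum_const, nsmul_eq_mul, mul_assoc]

theorem abs_transpose_mulVec_apply_le [Fintype m] (Ψ : Matrix m ι ℝ)
    (hcol : ∀ i, ∑ k, Ψ k i ^ 2 = 1) (η : m → ℝ) (i : ι) :
    |(Ψᵀ *ᵥ η) i| ≤ √(∑ k, η k ^ 2) := by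
  refine Real.abs_le_sqrt ?_
  simpa [mulVec, dotProduct, hcol i] using sum_mul_sq_le_sq_mul_sq univ (fun k => Ψ k i) η

theorem gradient_step_sub_eq [Fintype m] [Fintype ι] [DecidableEq ι] (Ψ : Matrix m ι ℝ)
    (x xdag : ι → ℝ) (η : m → ℝ) :
    x + Ψᵀ *ᵥ (Ψ *ᵥ xdag + η - Ψ *ᵥ x) - xdag = (Ψᵀ * Ψ - 1) *ᵥ (xdag - x) + Ψᵀ *ᵥ η := by
  simp only [mulVec_add, mulVec_sub, sub_mulVec, mulVec_mulVec, one_mulVec]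
  abel

theorem abs_gradient_step_sub_le [Fintype m] [Fintype ι] (Ψ : Matrix m ι ℝ) {μ : ℝ} (hμ : 0 ≤ μ)
    (hcol : ∀ i, ∑ k, Ψ k i ^ 2 = 1)
    (hcoh : ∀ i j, i ≠ j → |∑ k, Ψ k i * Ψ k j| ≤ μ) {A : Finset ι} {x xdag : ι → ℝ}
    (hx : Function.support x ⊆ A) (hxdag : Function.support xdag ⊆ A) (η : m → ℝ) (i : ι) :
    |(x + Ψᵀ *ᵥ (Ψ *ᵥ xdag + η - Ψ *ᵥ x)) i - xdag i|
      ≤ A.card * μ * ‖x - xdag‖ + √(∑ k, η k ^ 2) := by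
  classical
  have hd : Function.support (xdag - x) ⊆ A :=
    (Function.support_sub xdag x).trans (Set.union_subset hxdag hx)
  rw [← Pi.sub_apply, gradient_step_sub_eq, Pi.add_apply, norm_sub_rev]
  exact (abs_add_le _ _).trans <| add_le_add
    (abs_mulVec_apply_le_of_support_subset _ (abs_gram_sub_one_apply_le Ψ hμ hcol hcoh) hd i)
    (abs_transpose_mulVec_apply_le Ψ hcol η i)

end Coherence

section Parameters

variable {μ s C₀ : ℝ}

theorem inv_sqrt_two_mul_lt_one (hμs : 0 < μ * s) (hμs' : μ * s < 1 / 2)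
    (hC : 1 / (2 * (1 - 2 * μ * s) ^ 2) < C₀) :
    1 / √(2 * C₀) < 1 := by
  have hsq : (1 - 2 * μ * s) ^ 2 < 1 := by nlinarith
  have hsq0 : 0 < (1 - 2 * μ * s) ^ 2 := by nlinarith
  have h2C : 1 < 2 * C₀ := by
    have : 1 / 2 < 1 / (2 * (1 - 2 * μ * s) ^ 2) := by
      apply one_div_lt_one_div_of_lt (by positivity); linarith
    linarith
  rw [div_lt_one (by positivity), Real.lt_sqrt zero_le_one]
  linarith

theorem le_inv_sqrt_two_mul_mul_sqrt {ε lam : ℝ} (hε : 0 ≤ ε) (hC₀ : 0 < C₀)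
    (hlam : C₀ * ε ^ 2 ≤ lam) :
    ε ≤ 1 / √(2 * C₀) * √(2 * lam) := by
  have hlam0 : 0 ≤ lam := (by positivity : 0 ≤ C₀ * ε ^ 2).trans hlam
  rw [div_mul_eq_mul_div, one_mul, le_div_iff₀ (by positivity), ← Real.sqrt_sq hε,
    ← Real.sqrt_mul (sq_nonneg ε), Real.sqrt_le_sqrt_iff (by positivity)]
  nlinarith

theorem two_le_mul_sqrt_of_sq_le {c α γ : ℝ} (hμs : 0 < μ * s) (hc : c < 1)
    (hα : α = (1 - c) / (μ * s)) (hγ : (2 * μ * s / (1 - c)) ^ 2 ≤ γ) :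
    2 ≤ α * √γ := by
  have hα0 : 0 < α := hα ▸ div_pos (by linarith) hμs
  have hratio : 2 * μ * s / (1 - c) = 2 / α := by
    rw [hα]; field_simp [(by linarith : (1 - c) ≠ 0)]
  have h2α : 2 / α ≤ √γ := (Real.le_sqrt (by positivity) ((sq_nonneg _).trans hγ)).mpr
    (hratio ▸ hγ)
  calc (2 : ℝ) = α * (2 / α) := by field_simp
    _ ≤ α * √γ := by gcongr

end Parameters

/-- Key one-step implication for IHTC: under the mutual coherence condition `μs < 1/2`,
with `C₀ > 1/(2(1 − 2μs)²)`, `α = (1 − 1/√(2C₀))/(μs)`, `γ ∈ [(2μs/(1 − 1/√(2C₀)))², 1)`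
and `λ ≥ C₀ε²`, if `supp(x) ⊂ A†` and `‖x − x†‖_{ℓ∞} ≤ α√(2λ)`, then the one-step update
`x⁺ = H_λ(x + Ψᵗ(y − Ψx))` satisfies `supp(x⁺) ⊂ A†` and `‖x⁺ − x†‖_{ℓ∞} ≤ α√(2γλ)`. -/
theorem hard_step_key_implication {n p : ℕ} (Ψ : Matrix (Fin n) (Fin p) ℝ)
    (μ ε C₀ α γ lam : ℝ) (s : ℕ)
    (xdag : Fin p → ℝ) (η y : Fin n → ℝ) (Adag : Finset (Fin p))
    (hcol : ∀ i, ∑ k, Ψ k i ^ 2 = 1)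
    (hcoh : ∀ i j, i ≠ j → |∑ k, Ψ k i * Ψ k j| ≤ μ) (hμpos : 0 < μ)
    (hsuppdag : Function.support xdag = (Adag : Set (Fin p)))
    (hcard : Adag.card = s) (hs : 1 ≤ s) (hμs : μ * s < 1 / 2)
    (hy : y = Ψ.mulVec xdag + η)
    (hη : Real.sqrt (∑ k, η k ^ 2) ≤ ε)
    (hC : 1 / (2 * (1 - 2 * μ * s) ^ 2) < C₀)
    (hα : α = (1 - 1 / Real.sqrt (2 * C₀)) / (μ * s))
    (hγ : γ ∈ Set.Ico ((2 * μ * s / (1 - 1 / Real.sqrt (2 * C₀))) ^ 2) 1)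
    (hlam : C₀ * ε ^ 2 ≤ lam)
    (x : Fin p → ℝ)
    (hsupp : Function.support x ⊆ (Adag : Set (Fin p)))
    (hE : ‖x - xdag‖ ≤ α * Real.sqrt (2 * lam)) :
    Function.support
        (fun i => hardThresh lam (x i + Ψ.transpose.mulVec (y - Ψ.mulVec x) i))
      ⊆ (Adag : Set (Fin p)) ∧
    ‖(fun i => hardThresh lam (x i + Ψ.transpose.mulVec (y - Ψ.mulVec x) i)) - xdag‖
      ≤ α * Real.sqrt (2 * γ * lam) := by
  subst hy
  set B := √(2 * lam)
  set c := 1 / √(2 * C₀)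
  have hμs0 : 0 < μ * s := mul_pos hμpos (by exact_mod_cast hs)
  have hc : c < 1 := inv_sqrt_two_mul_lt_one hμs0 hμs hC
  have hC₀ : 0 < C₀ := lt_of_le_of_lt (by positivity) hC
  have hεB : ε ≤ c * B :=
    le_inv_sqrt_two_mul_mul_sqrt ((Real.sqrt_nonneg _).trans hη) hC₀ hlam
  have hstep : ∀ i, |(x + Ψᵀ *ᵥ (Ψ *ᵥ xdag + η - Ψ *ᵥ x)) i - xdag i| ≤ B := fun i =>
    calc _ ≤ Adag.card * μ * ‖x - xdag‖ + √(∑ k, η k ^ 2) :=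
          abs_gradient_step_sub_le Ψ hμpos.le hcol hcoh hsupp hsuppdag.le η i
      _ ≤ μ * s * (α * B) + c * B := by
          rw [hcard, mul_comm (s : ℝ)]; gcongr; exact hη.trans hεB
      _ = B := by rw [hα]; field_simp; ring
  refine ⟨(support_hardThresh_subset hstep).trans hsuppdag.le, ?_⟩
  calc _ ≤ 2 * B := norm_hardThresh_sub_le hstep
    _ ≤ α * √γ * B := by gcongr; exact two_le_mul_sqrt_of_sq_le hμs0 hc hα hγ.1
    _ = α * √(2 * γ * lam) := by
      rw [mul_assoc, ← Real.sqrt_mul ((sq_nonneg _).trans hγ.1), mul_left_comm, ← mul_assoc]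
end
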